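/- Let ε ∈ [0,1) and let k ≥ 1 be an integer. Fix (δ₁,…,δ_{k−1}) ∈ [0,1]^{k−1} and let N(δ₀) and D(δ₀) denote the numerator and denominator of R_ε as functions of δ₀ with the other coordinates fixed, and let N′, D′ denote their derivatives in δ₀. Then the function δ₀ ↦ N′(δ₀)·D(δ₀) − N(δ₀)·D′(δ₀) is strictly decreasing on the open interval (0,1); consequently ∂R_ε/∂δ₀ changes sign at most once on (0,1), from positive to negative. -/

import Mathlib

/-!
Peeling off the first index gives `N(δ) = ε̄·H₂(δ₀) + δ₀·A` and `D(δ) = 1 + δ₀·B`, where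
`A = ε̄·N(δ₁,…)` and `B = ε̄·D(δ₁,…) ≥ 0` do not depend on `δ₀`. For such an entropy-plus-linear
numerator over an affine denominator, `N′D − ND′ = ε̄·((1 + B)·log₂(1 − δ₀) − log₂ δ₀) + A`:
the terms in `δ₀·log` cancel, and what remains is strictly decreasing. Since `D > 0`, the sign
of `∂R/∂δ₀ = (N′D − ND′)/D²` is that of `N′D − ND′`, so it can only go from `≥ 0` to `< 0`.
-/

/-- The binary entropy function (base 2), with `H2 0 = H2 1 = 0`. -/
noncomputable def H2 (x : ℝ) : ℝ := -(x * Real.logb 2 x) - (1 - x) * Real.logb 2 (1 - x)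

/-- Numerator `N(δ₀,…,δ_{k−1}) = Σ_{i=0}^{k−1} ε̄^{i+1}·H₂(δ_i)·Π_{m=0}^{i−1} δ_m`. -/
noncomputable def Nnum (ε : ℝ) (k : ℕ) (δ : ℕ → ℝ) : ℝ :=
  ∑ i ∈ Finset.range k, (1 - ε) ^ (i + 1) * H2 (δ i) * ∏ m ∈ Finset.range i, δ m

/-- Denominator `D(δ₀,…,δ_{k−1}) = 1 + Σ_{i=0}^{k−1} ε̄^{i+1}·Π_{m=0}^{i} δ_m`. -/
noncomputable def Dden (ε : ℝ) (k : ℕ) (δ : ℕ → ℝ) : ℝ :=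
  1 + ∑ i ∈ Finset.range k, (1 - ε) ^ (i + 1) * ∏ m ∈ Finset.range (i + 1), δ m

/-- `R_ε = N/D`. -/
noncomputable def Rfun (ε : ℝ) (k : ℕ) (δ : ℕ → ℝ) : ℝ :=
  Nnum ε k δ / Dden ε k δ

open Real

lemma H2_eq_binEntropy (x : ℝ) : H2 x = binEntropy x / log 2 := by
  simp only [H2, binEntropy, logb, log_inv]
  ring

lemma hasDerivAt_H2 {t : ℝ} (h0 : t ≠ 0) (h1 : t ≠ 1) :
    HasDerivAt H2 (logb 2 (1 - t) - logb 2 t) t := by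
  rw [funext H2_eq_binEntropy]
  simpa [logb, sub_div] using (hasDerivAt_binEntropy h0 h1).div_const (log 2)

lemma Nnum_succ (ε : ℝ) (k : ℕ) (δ : ℕ → ℝ) :
    Nnum ε (k + 1) δ =
      (1 - ε) * H2 (δ 0) + δ 0 * ((1 - ε) * Nnum ε k (fun i => δ (i + 1))) := by
  simp only [Nnum, Finset.sum_range_succ' _ k, Finset.prod_range_succ', Finset.mul_sum]
  rw [add_comm]
  simp only [zero_add, pow_one, Finset.range_zero, Finset.prod_empty, mul_one]
  congr 1
  refine Finset.sum_congr rfl fun i _ => ?_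
  ring

lemma Dden_succ (ε : ℝ) (k : ℕ) (δ : ℕ → ℝ) :
    Dden ε (k + 1) δ = 1 + δ 0 * ((1 - ε) * Dden ε k (fun i => δ (i + 1))) := by
  have hterm : ∀ i, (1 - ε) ^ (i + 1 + 1) * ∏ m ∈ Finset.range (i + 1 + 1), δ m =
      δ 0 * ((1 - ε) * ((1 - ε) ^ (i + 1) * ∏ m ∈ Finset.range (i + 1), δ (m + 1))) := by
    intro i
    rw [Finset.prod_range_succ' _ (i + 1)]
    ring
  rw [Dden, Dden, Finset.sum_range_succ', Finset.sum_congr rfl fun i _ => hterm i,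
    ← Finset.mul_sum, ← Finset.mul_sum, Finset.prod_range_one]
  ring

lemma one_le_Dden {ε : ℝ} (hε : ε ≤ 1) {k : ℕ} {δ : ℕ → ℝ} (hδ : ∀ i < k, 0 ≤ δ i) :
    1 ≤ Dden ε k δ := by
  refine le_add_of_nonneg_right (Finset.sum_nonneg fun i hi => ?_)
  refine mul_nonneg (pow_nonneg (by linarith) _) (Finset.prod_nonneg fun m hm => hδ m ?_)
  have := Finset.mem_range.mp hi
  have := Finset.mem_range.mp hm
  omega

noncomputable def derivDivNumerator (f g : ℝ → ℝ) (t : ℝ) : ℝ :=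
  deriv f t * g t - f t * deriv g t

lemma deriv_div_neg_of_strictAntiOn_derivDivNumerator {f g : ℝ → ℝ} {S : Set ℝ}
    (hW : StrictAntiOn (derivDivNumerator f g) S) (hf : ∀ t ∈ S, DifferentiableAt ℝ f t)
    (hg : ∀ t ∈ S, DifferentiableAt ℝ g t) (hg0 : ∀ t ∈ S, g t ≠ 0)
    {a b : ℝ} (ha : a ∈ S) (hb : b ∈ S) (hab : a < b)
    (hfga : deriv (fun s => f s / g s) a ≤ 0) : deriv (fun s => f s / g s) b < 0 := by
  have hderiv : ∀ t ∈ S, deriv (fun s => f s / g s) t = derivDivNumerator f g t / g t ^ 2 :=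
    fun t ht => deriv_div (hf t ht) (hg t ht) (hg0 t ht)
  have hWa : derivDivNumerator f g a ≤ 0 := by
    rw [hderiv a ha] at hfga
    have hpos : 0 < g a ^ 2 := by have := hg0 a ha; positivity
    simpa using (div_le_iff₀ hpos).mp hfga
  rw [hderiv b hb]
  exact div_neg_of_neg_of_pos ((hW ha hb hab).trans_le hWa) (by have := hg0 b hb; positivity)

section EntropyOverAffine

variable (c A B : ℝ)

lemma hasDerivAt_entropy_add_linear {t : ℝ} (ht : t ∈ Set.Ioo (0 : ℝ) 1) :
    HasDerivAt (fun s => c * H2 s + s * A) (c * (logb 2 (1 - t) - logb 2 t) + A) t :=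
  ((hasDerivAt_H2 ht.1.ne' (by linarith [ht.2])).const_mul c).add (hasDerivAt_mul_const A)

lemma derivDivNumerator_entropy_add_linear_affine {t : ℝ} (ht : t ∈ Set.Ioo (0 : ℝ) 1) :
    derivDivNumerator (fun s => c * H2 s + s * A) (fun s => 1 + s * B) t =
      c * ((1 + B) * logb 2 (1 - t) - logb 2 t) + A := by
  rw [derivDivNumerator, (hasDerivAt_entropy_add_linear c A ht).deriv,
    ((hasDerivAt_mul_const B).const_add 1).deriv, H2]
  ring

variable {c B}

lemma strictAntiOn_derivDivNumerator_entropy_add_linear_affine (hc : 0 < c) (hB : 0 ≤ 1 + B) :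
    StrictAntiOn (derivDivNumerator (fun s => c * H2 s + s * A) (fun s => 1 + s * B))
      (Set.Ioo (0 : ℝ) 1) := by
  intro a ha b hb hab
  rw [derivDivNumerator_entropy_add_linear_affine c A B ha,
    derivDivNumerator_entropy_add_linear_affine c A B hb]
  have hlog_one_sub : logb 2 (1 - b) < logb 2 (1 - a) :=
    logb_lt_logb (by norm_num) (by linarith [hb.2]) (by linarith)
  have hlog : logb 2 a < logb 2 b := logb_lt_logb (by norm_num) ha.1 hab
  have := mul_le_mul_of_nonneg_left hlog_one_sub.le hB
  gcongr ?_ + A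
  nlinarith

end EntropyOverAffine

/-- Let `ε ∈ [0,1)`, `k ≥ 1`, and fix `(δ₁,…,δ_{k−1}) ∈ [0,1]^{k−1}`.  Viewing `N`, `D`
as functions of `δ₀` (with derivatives `N′`, `D′` in `δ₀`), the function
`δ₀ ↦ N′(δ₀)·D(δ₀) − N(δ₀)·D′(δ₀)` is strictly decreasing on `(0,1)`; consequently
`∂R_ε/∂δ₀` changes sign at most once on `(0,1)`, from positive to negative. -/
theorem first_partial_numerator_strictAnti
    (ε : ℝ) (hε : ε ∈ Set.Ico (0 : ℝ) 1) (k : ℕ) (hk : 1 ≤ k)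
    (δ : ℕ → ℝ) (hδ : ∀ i, 1 ≤ i → i < k → δ i ∈ Set.Icc (0 : ℝ) 1) :
    StrictAntiOn (fun t : ℝ =>
        deriv (fun s : ℝ => Nnum ε k (Function.update δ 0 s)) t *
          Dden ε k (Function.update δ 0 t) -
        Nnum ε k (Function.update δ 0 t) *
          deriv (fun s : ℝ => Dden ε k (Function.update δ 0 s)) t)
      (Set.Ioo (0 : ℝ) 1) ∧
    ∀ a ∈ Set.Ioo (0 : ℝ) 1, ∀ b ∈ Set.Ioo (0 : ℝ) 1, a < b →
      deriv (fun s : ℝ => Rfun ε k (Function.update δ 0 s)) a ≤ 0 →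
      deriv (fun s : ℝ => Rfun ε k (Function.update δ 0 s)) b < 0 := by
  obtain ⟨j, rfl⟩ := Nat.exists_eq_add_of_le' hk
  have htail : ∀ s, (fun i => Function.update δ 0 s (i + 1)) = fun i => δ (i + 1) :=
    fun s => funext fun i => Function.update_of_ne i.succ_ne_zero _ _
  set A := (1 - ε) * Nnum ε j (fun i => δ (i + 1))
  set B := (1 - ε) * Dden ε j (fun i => δ (i + 1))
  have hN : (fun s => Nnum ε (j + 1) (Function.update δ 0 s)) =
      fun s => (1 - ε) * H2 s + s * A := by
    ext s; rw [Nnum_succ, htail, Function.update_self, mul_comm s]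
  have hD : (fun s => Dden ε (j + 1) (Function.update δ 0 s)) = fun s => 1 + s * B := by
    ext s; rw [Dden_succ, htail, Function.update_self]
  have hc : 0 < 1 - ε := by linarith [hε.2]
  have hB : 0 ≤ B := mul_nonneg hc.le <| zero_le_one.trans <|
    one_le_Dden hε.2.le fun i hi => (hδ (i + 1) (by omega) (by omega)).1
  have hW :=
    strictAntiOn_derivDivNumerator_entropy_add_linear_affine A hc (by linarith : 0 ≤ 1 + B)
  rw [← hN, ← hD] at hW
  refine ⟨hW, fun a ha b hb hab =>
    deriv_div_neg_of_strictAntiOn_derivDivNumerator hW ?_ ?_ ?_ ha hb hab⟩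
  · exact fun t ht => hN ▸ (hasDerivAt_entropy_add_linear _ A ht).differentiableAt
  · exact fun t _ => hD ▸ ((hasDerivAt_mul_const B).const_add 1).differentiableAt
  · exact fun t ht => (congrFun hD t).trans_ne (by nlinarith [ht.1])
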